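/- Validity of the closed-form IASB6 tuning value (equations (39)–(40) analogue for β): In the per-user per-tone spectrum optimization setup, define β* = (int²/w) · Σ_{m∈I} w_m·s̃_m·a_m² · ( 1/(rec_m(M)·int_m(M)) ) · ( 1/rec_m(M) + 1/int_m(M) ). Then β* ≥ 0 and the function f2_IASB6(s) = −β*·w·log(1 + s/int) − Σ_{m∈I} w_m·log(1 + s̃_m/int_m(s)) satisfies f2_IASB6″(s) ≤ 0 for all s ∈ [0, M], i.e. f2_IASB6 is concave on [0, M]. -/

import Mathlib

/-!
The second derivative of `f2_IASB6` is `β·w/(int + s)² − Σ_m w_m·C_m(int_m(s))`, where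
`C_m(i) = (a_m/i)² − (a_m/(i + s̃_m))²` is the curvature of the crosstalk term `log(1 + s̃_m/i)`.
`C_m` is nonnegative and decreasing in the interference level `i`, and `int_m` is increasing in `s`,
so on `[0, M]` the crosstalk part is at least its value at `s = M`, while `(int + s)² ≥ int²`.
Choosing `β*·w = int²·Σ_m w_m·C_m(int_m(M))` balances these two extreme cases, and the
product form of `C_m` turns this into the closed form of `β*`.
-/

open Real Set Filter Topology

theorem hasDerivAt_log_one_add_div_const {c x : ℝ} (hc : c ≠ 0) (hx : c + x ≠ 0) :
    HasDerivAt (fun y => log (1 + y / c)) (c + x)⁻¹ x := by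
  have hlin : HasDerivAt (fun y => 1 + y / c) c⁻¹ x := by
    simpa using ((hasDerivAt_id x).div_const c).const_add 1
  have hpos : 1 + x / c ≠ 0 := by
    rwa [one_add_div hc, div_ne_zero_iff, and_iff_left hc]
  refine (hlin.log hpos).congr_deriv ?_
  field_simp

theorem hasDerivAt_inv_const_add {c x : ℝ} (hx : c + x ≠ 0) :
    HasDerivAt (fun y => (c + y)⁻¹) (-((c + x) ^ 2)⁻¹) x :=
  (((hasDerivAt_id x).const_add c).inv hx).congr_deriv (by simp [neg_div])

theorem hasDerivAt_div_affine {a b x : ℝ} (hx : a * x + b ≠ 0) :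
    HasDerivAt (fun y => a / (a * y + b)) (-(a / (a * x + b)) ^ 2) x := by
  have hlin : HasDerivAt (fun y => a * y + b) a x := by
    simpa using ((hasDerivAt_id x).const_mul a).add_const b
  refine ((hasDerivAt_const x a).fun_div hlin hx).congr_deriv ?_
  rw [div_pow]
  ring

theorem hasDerivAt_log_one_add_div_affine {a z t x : ℝ} (hx : a * x + z ≠ 0)
    (hxt : a * x + z + t ≠ 0) :
    HasDerivAt (fun y => log (1 + t / (a * y + z))) (a / (a * x + z + t) - a / (a * x + z)) x := by
  have hlin : HasDerivAt (fun y => a * y + z) a x := by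
    simpa using ((hasDerivAt_id x).const_mul a).add_const z
  have hpos : 1 + t / (a * x + z) ≠ 0 := by
    rwa [one_add_div hx, div_ne_zero_iff, and_iff_left hx]
  refine ((((hasDerivAt_const x t).fun_div hlin hx).const_add 1).log hpos).congr_deriv ?_
  field_simp
  ring

theorem hasDerivAt_div_affine_add_sub_div_affine {a z t x : ℝ} (hx : a * x + z ≠ 0)
    (hxt : a * x + z + t ≠ 0) :
    HasDerivAt (fun y => a / (a * y + z + t) - a / (a * y + z))
      ((a / (a * x + z)) ^ 2 - (a / (a * x + z + t)) ^ 2) x := by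
  have h := (hasDerivAt_div_affine (b := z + t) (by rwa [← add_assoc])).fun_sub
    (hasDerivAt_div_affine hx)
  simp only [← add_assoc] at h
  exact h.congr_deriv (by ring)

/-- The second derivative in `s` of `log (1 + t / (a * s + z))`, at interference `i = a * s + z`. -/
noncomputable def crosstalkCurvature (a t i : ℝ) : ℝ := (a / i) ^ 2 - (a / (i + t)) ^ 2

theorem crosstalkCurvature_eq_mul {a t i : ℝ} (hi : i ≠ 0) (hit : t + i ≠ 0) :
    crosstalkCurvature a t i = t * a ^ 2 * (1 / ((t + i) * i)) * (1 / (t + i) + 1 / i) := by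
  rw [crosstalkCurvature, add_comm i t]
  field_simp
  ring

theorem crosstalkCurvature_nonneg {a t i : ℝ} (ht : 0 ≤ t) (hi : 0 < i) :
    0 ≤ crosstalkCurvature a t i := by
  rw [crosstalkCurvature_eq_mul hi.ne' (by positivity)]
  positivity

theorem crosstalkCurvature_antitoneOn {a t : ℝ} (ht : 0 ≤ t) :
    AntitoneOn (crosstalkCurvature a t) (Ioi 0) := by
  intro i (hi : 0 < i) j (hj : 0 < j) hij
  rw [crosstalkCurvature_eq_mul hi.ne' (by positivity),
    crosstalkCurvature_eq_mul hj.ne' (by positivity)]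
  gcongr

theorem deriv_deriv_eq_of_hasDerivAt {f f' f'' : ℝ → ℝ} {x : ℝ}
    (hf : ∀ᶠ y in 𝓝 x, HasDerivAt f (f' y) y) (hf' : HasDerivAt f' (f'' x) x) :
    deriv (deriv f) x = f'' x :=
  (Filter.EventuallyEq.deriv_eq (hf.mono fun _ hy => hy.deriv)).trans hf'.deriv

theorem concaveOn_of_hasDerivAt2_nonpos {D : Set ℝ} (hD : Convex ℝ D) {f f' f'' : ℝ → ℝ}
    (hf : ∀ x ∈ D, HasDerivAt f (f' x) x) (hf' : ∀ x ∈ D, HasDerivAt f' (f'' x) x)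
    (hf'' : ∀ x ∈ D, f'' x ≤ 0) : ConcaveOn ℝ D f :=
  concaveOn_of_hasDerivWithinAt2_nonpos hD
    (fun x hx => (hf x hx).continuousAt.continuousWithinAt)
    (fun x hx => (hf x (interior_subset hx)).hasDerivWithinAt)
    (fun x hx => (hf' x (interior_subset hx)).hasDerivWithinAt)
    (fun x hx => hf'' x (interior_subset hx))

section Objective

variable {ι : Type*} (I : Finset ι) (c intn : ℝ) (wI aI sI zI : ι → ℝ)

/-- `f2_IASB6` is the case `c = -β * w`. -/
noncomputable def iasb6Objective (s : ℝ) : ℝ :=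
  c * log (1 + s / intn) - ∑ m ∈ I, wI m * log (1 + sI m / (aI m * s + zI m))

noncomputable def iasb6ObjectiveDeriv (s : ℝ) : ℝ :=
  c * (intn + s)⁻¹ - ∑ m ∈ I, wI m * (aI m / (aI m * s + zI m + sI m) - aI m / (aI m * s + zI m))

noncomputable def iasb6ObjectiveDeriv2 (s : ℝ) : ℝ :=
  -c * ((intn + s) ^ 2)⁻¹ - ∑ m ∈ I, wI m * crosstalkCurvature (aI m) (sI m) (aI m * s + zI m)

variable {I c intn wI aI sI zI}

theorem eventually_interference_pos (hintn : 0 < intn) (haI : ∀ m ∈ I, 0 ≤ aI m)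
    (hzI : ∀ m ∈ I, 0 < zI m) {x : ℝ} (hx : 0 ≤ x) :
    ∀ᶠ y in 𝓝 x, 0 < intn + y ∧ ∀ m ∈ I, 0 < aI m * y + zI m := by
  refine (((continuous_const.add continuous_id).tendsto x).eventually
    (lt_mem_nhds (show 0 < intn + x by linarith))).and ((eventually_all_finset I).2 fun m hm => ?_)
  exact (((continuous_const.mul continuous_id).add continuous_const).tendsto x).eventually
    (lt_mem_nhds (add_pos_of_nonneg_of_pos (mul_nonneg (haI m hm) hx) (hzI m hm)))

theorem hasDerivAt_iasb6Objective {x : ℝ} (hintn : intn ≠ 0) (hx : 0 < intn + x)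
    (hxI : ∀ m ∈ I, 0 < aI m * x + zI m) (hsI : ∀ m ∈ I, 0 ≤ sI m) :
    HasDerivAt (iasb6Objective I c intn wI aI sI zI)
      (iasb6ObjectiveDeriv I c intn wI aI sI zI x) x :=
  ((hasDerivAt_log_one_add_div_const hintn hx.ne').const_mul c).fun_sub <|
    HasDerivAt.fun_sum fun m hm =>
      (hasDerivAt_log_one_add_div_affine (hxI m hm).ne'
        (add_pos_of_pos_of_nonneg (hxI m hm) (hsI m hm)).ne').const_mul (wI m)

theorem hasDerivAt_iasb6ObjectiveDeriv {x : ℝ} (hx : 0 < intn + x)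
    (hxI : ∀ m ∈ I, 0 < aI m * x + zI m) (hsI : ∀ m ∈ I, 0 ≤ sI m) :
    HasDerivAt (iasb6ObjectiveDeriv I c intn wI aI sI zI)
      (iasb6ObjectiveDeriv2 I c intn wI aI sI zI x) x := by
  have h := ((hasDerivAt_inv_const_add hx.ne').const_mul c).fun_sub <|
    HasDerivAt.fun_sum fun m hm =>
      (hasDerivAt_div_affine_add_sub_div_affine (hxI m hm).ne'
        (add_pos_of_pos_of_nonneg (hxI m hm) (hsI m hm)).ne').const_mul (wI m)
  exact h.congr_deriv (by simp only [iasb6ObjectiveDeriv2, crosstalkCurvature]; ring)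

theorem iasb6ObjectiveDeriv2_nonpos {M x : ℝ} (hx : x ∈ Icc 0 M) (hintn : 0 < intn)
    (hwI : ∀ m ∈ I, 0 ≤ wI m) (haI : ∀ m ∈ I, 0 ≤ aI m) (hsI : ∀ m ∈ I, 0 ≤ sI m)
    (hzI : ∀ m ∈ I, 0 < zI m)
    (hc : -c = intn ^ 2 * ∑ m ∈ I, wI m * crosstalkCurvature (aI m) (sI m) (aI m * M + zI m)) :
    iasb6ObjectiveDeriv2 I c intn wI aI sI zI x ≤ 0 := by
  obtain ⟨hx0, hxM⟩ := hx
  have hcurv : ∑ m ∈ I, wI m * crosstalkCurvature (aI m) (sI m) (aI m * M + zI m)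
      ≤ ∑ m ∈ I, wI m * crosstalkCurvature (aI m) (sI m) (aI m * x + zI m) := by
    refine Finset.sum_le_sum fun m hm => mul_le_mul_of_nonneg_left ?_ (hwI m hm)
    have hpos : 0 < aI m * x + zI m :=
      add_pos_of_nonneg_of_pos (mul_nonneg (haI m hm) hx0) (hzI m hm)
    have hmono : aI m * x + zI m ≤ aI m * M + zI m := by nlinarith [haI m hm]
    exact crosstalkCurvature_antitoneOn (hsI m hm) hpos (hpos.trans_le hmono) hmono
  have hcurvM : 0 ≤ ∑ m ∈ I, wI m * crosstalkCurvature (aI m) (sI m) (aI m * M + zI m) :=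
    Finset.sum_nonneg fun m hm => mul_nonneg (hwI m hm)
      (crosstalkCurvature_nonneg (hsI m hm) (by nlinarith [haI m hm, hzI m hm]))
  have hsq : intn ^ 2 ≤ (intn + x) ^ 2 := by nlinarith
  rw [iasb6ObjectiveDeriv2, sub_nonpos, hc, ← div_eq_mul_inv, div_le_iff₀ (by positivity)]
  calc intn ^ 2 * _ ≤ (intn + x) ^ 2 * _ := mul_le_mul_of_nonneg_right hsq hcurvM
    _ ≤ _ := by rw [mul_comm]; exact mul_le_mul_of_nonneg_right hcurv (by positivity)

theorem sum_mul_crosstalkCurvature_eq {M : ℝ} (hiM : ∀ m ∈ I, 0 < aI m * M + zI m)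
    (hsI : ∀ m ∈ I, 0 ≤ sI m) :
    ∑ m ∈ I, wI m * crosstalkCurvature (aI m) (sI m) (aI m * M + zI m) =
      ∑ m ∈ I, wI m * sI m * aI m ^ 2 *
        (1 / ((sI m + aI m * M + zI m) * (aI m * M + zI m))) *
        (1 / (sI m + aI m * M + zI m) + 1 / (aI m * M + zI m)) :=
  Finset.sum_congr rfl fun m hm => by
    rw [crosstalkCurvature_eq_mul (hiM m hm).ne' (by linarith [hiM m hm, hsI m hm])]
    ring

end Objective

theorem IASB6_tuning_value_valid_general
    {ι : Type*} (I : Finset ι)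
    (M w intn : ℝ) (wI aI sI zI : ι → ℝ)
    (hM : 0 < M)
    (hw : 0 < w) (hintn : 0 < intn)
    (hwI : ∀ m ∈ I, 0 < wI m) (haI : ∀ m ∈ I, 0 ≤ aI m)
    (hsI : ∀ m ∈ I, 0 < sI m) (hzI : ∀ m ∈ I, 0 < zI m)
    (βstar : ℝ)
    (hβstar : βstar = intn ^ 2 / w *
        ∑ m ∈ I, wI m * sI m * (aI m) ^ 2 *
          (1 / ((sI m + aI m * M + zI m) * (aI m * M + zI m))) *
          (1 / (sI m + aI m * M + zI m) + 1 / (aI m * M + zI m)))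
    (f2IASB6 : ℝ → ℝ)
    (hf2 : f2IASB6 = fun s => -βstar * w * Real.log (1 + s / intn)
        - ∑ m ∈ I, wI m * Real.log (1 + sI m / (aI m * s + zI m))) :
    0 ≤ βstar ∧
    (∀ s ∈ Set.Icc 0 M, deriv (deriv f2IASB6) s ≤ 0) ∧
    ConcaveOn ℝ (Set.Icc 0 M) f2IASB6 := by
  have hsI' : ∀ m ∈ I, 0 ≤ sI m := fun m hm => (hsI m hm).le
  have hiM : ∀ m ∈ I, 0 < aI m * M + zI m := fun m hm =>
    add_pos_of_nonneg_of_pos (mul_nonneg (haI m hm) hM.le) (hzI m hm)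
  rw [← sum_mul_crosstalkCurvature_eq hiM hsI'] at hβstar
  have hc : -(-βstar * w) =
      intn ^ 2 * ∑ m ∈ I, wI m * crosstalkCurvature (aI m) (sI m) (aI m * M + zI m) := by
    rw [hβstar, neg_mul, neg_neg, mul_right_comm, div_mul_cancel₀ _ hw.ne']
  have hβ : 0 ≤ βstar := hβstar ▸ mul_nonneg (by positivity) (Finset.sum_nonneg fun m hm =>
    mul_nonneg (hwI m hm).le (crosstalkCurvature_nonneg (hsI' m hm) (hiM m hm)))
  have hderivs : ∀ x ∈ Icc 0 M, ∀ᶠ y in 𝓝 x,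
      HasDerivAt f2IASB6 (iasb6ObjectiveDeriv I (-βstar * w) intn wI aI sI zI y) y ∧
      HasDerivAt (iasb6ObjectiveDeriv I (-βstar * w) intn wI aI sI zI)
        (iasb6ObjectiveDeriv2 I (-βstar * w) intn wI aI sI zI y) y := fun x hx =>
    (eventually_interference_pos hintn haI hzI hx.1).mono fun y ⟨hy, hyI⟩ =>
      ⟨hf2 ▸ hasDerivAt_iasb6Objective hintn.ne' hy hyI hsI',
        hasDerivAt_iasb6ObjectiveDeriv hy hyI hsI'⟩
  have hle : ∀ x ∈ Icc 0 M, iasb6ObjectiveDeriv2 I (-βstar * w) intn wI aI sI zI x ≤ 0 :=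
    fun x hx => iasb6ObjectiveDeriv2_nonpos hx hintn (fun m hm => (hwI m hm).le) haI hsI' hzI hc
  refine ⟨hβ, fun x hx => ?_, ?_⟩
  · rw [deriv_deriv_eq_of_hasDerivAt ((hderivs x hx).mono fun _ hy => hy.1)
      (hderivs x hx).self_of_nhds.2]
    exact hle x hx
  · exact concaveOn_of_hasDerivAt2_nonpos (convex_Icc 0 M)
      (fun x hx => (hderivs x hx).self_of_nhds.1) (fun x hx => (hderivs x hx).self_of_nhds.2) hle

/-- Validity of the closed-form IASB6 tuning value: with
`β* = (int²/w)·Σ_{m∈I} w_m·s̃_m·a_m²·(1/(rec_m(M)·int_m(M)))·(1/rec_m(M) + 1/int_m(M))`,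
we have `β* ≥ 0` and the function
`f2_IASB6(s) = −β*·w·log(1 + s/int) − Σ_{m∈I} w_m·log(1 + s̃_m/int_m(s))` has
nonpositive second derivative on `[0, M]`, i.e. it is concave on `[0, M]`. -/
theorem IASB6_tuning_value_valid
    {ι : Type*} (I : Finset ι)
    (M st w intn : ℝ) (wI aI sI zI : ι → ℝ)
    (hM : 0 < M) (hst : st ∈ Set.Icc 0 M)
    (hw : 0 < w) (hintn : 0 < intn)
    (hwI : ∀ m ∈ I, 0 < wI m) (haI : ∀ m ∈ I, 0 ≤ aI m)
    (hsI : ∀ m ∈ I, 0 < sI m) (hzI : ∀ m ∈ I, 0 < zI m)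
    (βstar : ℝ)
    (hβstar : βstar = intn ^ 2 / w *
        ∑ m ∈ I, wI m * sI m * (aI m) ^ 2 *
          (1 / ((sI m + aI m * M + zI m) * (aI m * M + zI m))) *
          (1 / (sI m + aI m * M + zI m) + 1 / (aI m * M + zI m)))
    (f2IASB6 : ℝ → ℝ)
    (hf2 : f2IASB6 = fun s => -βstar * w * Real.log (1 + s / intn)
        - ∑ m ∈ I, wI m * Real.log (1 + sI m / (aI m * s + zI m))) :
    0 ≤ βstar ∧
    (∀ s ∈ Set.Icc 0 M, deriv (deriv f2IASB6) s ≤ 0) ∧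
    ConcaveOn ℝ (Set.Icc 0 M) f2IASB6 :=
  IASB6_tuning_value_valid_general I M w intn wI aI sI zI hM hw hintn hwI haI hsI hzI βstar hβstar
    f2IASB6 hf2
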